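/- arXiv:1604.00456 — 3 statements merged into one kernel-verified Lean document; each statement's English description precedes it below -/
import Mathlib

section
/- Let C be a bounded convex subset of ℝⁿ, let P be a plank (a set of the form {x : a ≤ ⟨x, V⟩ ≤ b} for a unit vector V and reals a ≤ b) of width w = b − a in direction V, and set X = C \ P. If X is nonempty, convex, and 0 < w_V(X) with w_V(C) > 0, then for every unit vector v, w_v(X)/w_v(C) ≥ w_V(X)/w_V(C) (interpreting the left side as +∞ when w_v(C) = 0 unless w_v(X) = 0 too, in which case the claim is that w_v(X) ≥ (w_V(X)/w_V(C)) · w_v(C)). -/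
noncomputable def width {n : ℕ} (K : Set (EuclideanSpace ℝ (Fin n)))
    (v : EuclideanSpace ℝ (Fin n)) : ℝ :=
  sSup ((fun x => (inner ℝ x v : ℝ)) '' K) - sInf ((fun x => (inner ℝ x v : ℝ)) '' K)

/-! A convex set `C \ P` cannot meet both sides of the plank, so it is the cap of `C` cut off by
one open half-space, say `{⟪x, V⟫ > β}`. If `λ` is the ratio of the `V`-widths of the cap and of
`C`, then for every `s < λ` the homothety of ratio `s` centred at a point of `C` close enough to
the top of `C` in direction `V` maps `C` into the cap, so `s · w_v(C) ≤ w_v(cap)` in every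
direction `v`; let `s → λ`. -/

open scoped RealInnerProductSpace
open Set Bornology

theorem diff_preimage_Icc_eq_inter_or {α : Type*} [TopologicalSpace α] {C : Set α} {f : α → ℝ}
    (hf : Continuous f) {a b : ℝ} (hab : a ≤ b)
    (hX : IsPreconnected (C \ {x | a ≤ f x ∧ f x ≤ b})) :
    C \ {x | a ≤ f x ∧ f x ≤ b} = C ∩ {x | b < f x} ∨
      C \ {x | a ≤ f x ∧ f x ≤ b} = C ∩ {x | f x < a} := by
  set X := C \ {x | a ≤ f x ∧ f x ≤ b}
  -- `f '' X` is an interval, so it cannot reach both sides of `[a, b]` without meeting `b`.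
  have one_side : ∀ x ∈ X, ∀ y ∈ X, b < f x → a ≤ f y := by
    intro x hx y hy hbx
    by_contra! hya
    obtain ⟨z, hz, hzb⟩ := (hX.image f hf.continuousOn).Icc_subset ⟨y, hy, rfl⟩ ⟨x, hx, rfl⟩
      ⟨(hya.trans_le hab).le, hbx.le⟩
    exact hz.2 ⟨hab.trans hzb.ge, hzb.le⟩
  by_cases h : ∃ x ∈ X, b < f x
  · obtain ⟨x, hx, hbx⟩ := h
    refine Or.inl (ext fun z =>
      ⟨fun hz => ⟨hz.1, ?_⟩, fun hz => ⟨hz.1, fun hP => hP.2.not_gt hz.2⟩⟩)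
    show b < f z
    by_contra! hzb
    exact hz.2 ⟨one_side x hx z hz hbx, hzb⟩
  · push Not at h
    refine Or.inr (ext fun z =>
      ⟨fun hz => ⟨hz.1, ?_⟩, fun hz => ⟨hz.1, fun hP => hP.1.not_gt hz.2⟩⟩)
    show f z < a
    by_contra! haz
    exact hz.2 ⟨haz, h z hz⟩

theorem isBounded_image_inner {E : Type*} [NormedAddCommGroup E] [InnerProductSpace ℝ E]
    {K : Set E} (hK : IsBounded K) (v : E) : IsBounded ((fun x => ⟪x, v⟫) '' K) := by
  simpa [real_inner_comm] using (innerSL ℝ v).lipschitz.isBounded_image hK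

section width

variable {n : ℕ} {K L : Set (EuclideanSpace ℝ (Fin n))}

theorem width_neg (K : Set (EuclideanSpace ℝ (Fin n))) (v : EuclideanSpace ℝ (Fin n)) :
    width K (-v) = width K v := by
  have himage : (fun x => ⟪x, -v⟫) '' K = -((fun x => ⟪x, v⟫) '' K) := by
    rw [← image_neg_eq_neg, image_image]
    simp only [inner_neg_right]
  rw [width, width, himage, Real.sSup_neg, Real.sInf_neg]
  ring

theorem width_eq_diam (hK : IsBounded K) (v : EuclideanSpace ℝ (Fin n)) :
    width K v = Metric.diam ((fun x => ⟪x, v⟫) '' K) :=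
  (Real.diam_eq (isBounded_image_inner hK v)).symm

theorem width_nonneg (hK : IsBounded K) (v : EuclideanSpace ℝ (Fin n)) : 0 ≤ width K v :=
  width_eq_diam hK v ▸ Metric.diam_nonneg

theorem width_mono (hL : IsBounded L) (hKL : K ⊆ L) (v : EuclideanSpace ℝ (Fin n)) :
    width K v ≤ width L v := by
  rw [width_eq_diam (hL.subset hKL), width_eq_diam hL]
  exact Metric.diam_mono (image_mono hKL) (isBounded_image_inner hL v)

theorem Set.Nonempty.of_width_pos {v : EuclideanSpace ℝ (Fin n)} (h : 0 < width K v) :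
    K.Nonempty := by
  by_contra! hK
  simp [hK, width] at h

theorem inner_sub_inner_le_width (hK : IsBounded K) {x y : EuclideanSpace ℝ (Fin n)}
    (hx : x ∈ K) (hy : y ∈ K) (v : EuclideanSpace ℝ (Fin n)) : ⟪x, v⟫ - ⟪y, v⟫ ≤ width K v := by
  rw [width_eq_diam hK]
  exact (le_abs_self _).trans
    (Metric.dist_le_diam_of_mem (isBounded_image_inner hK v) ⟨x, hx, rfl⟩ ⟨y, hy, rfl⟩)

theorem width_le_of_forall_inner_sub_le (hK : IsBounded K) {v : EuclideanSpace ℝ (Fin n)}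
    {c : ℝ} (hc : 0 ≤ c) (h : ∀ x ∈ K, ∀ y ∈ K, ⟪x, v⟫ - ⟪y, v⟫ ≤ c) : width K v ≤ c := by
  rw [width_eq_diam hK]
  refine Metric.diam_le_of_forall_dist_le hc ?_
  rintro _ ⟨x, hx, rfl⟩ _ ⟨y, hy, rfl⟩
  exact abs_sub_le_iff.mpr ⟨h x hx y hy, h y hy x hx⟩

theorem mul_width_le_width_of_homothety_subset (hK : IsBounded K) (hL : IsBounded L)
    {p : EuclideanSpace ℝ (Fin n)} {s : ℝ} (hs : 0 < s) (hKL : ∀ x ∈ K, (1 - s) • p + s • x ∈ L)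
    (v : EuclideanSpace ℝ (Fin n)) : s * width K v ≤ width L v := by
  rw [← le_div_iff₀' hs]
  refine width_le_of_forall_inner_sub_le hK (div_nonneg (width_nonneg hL v) hs.le)
    fun x hx y hy => ?_
  rw [le_div_iff₀' hs]
  have := inner_sub_inner_le_width hL (hKL x hx) (hKL y hy) v
  simp only [inner_add_left, real_inner_smul_left] at this
  linarith

end width

section halfspace

variable {n : ℕ} {C : Set (EuclideanSpace ℝ (Fin n))}

-- `p` is taken so close to the top of `C` in direction `V` that the image of `C` clears `β`.
theorem exists_homothety_subset_inter_halfspace (hb : IsBounded C) (hc : Convex ℝ C)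
    {V : EuclideanSpace ℝ (Fin n)} {β s : ℝ} (hs₀ : 0 < s)
    (hs : s < width (C ∩ {x | β < ⟪x, V⟫}) V / width C V) :
    ∃ p, ∀ x ∈ C, (1 - s) • p + s • x ∈ C ∩ {x | β < ⟪x, V⟫} := by
  set X := C ∩ {x | β < ⟪x, V⟫}
  set r := width X V / width C V
  set g := fun x : EuclideanSpace ℝ (Fin n) => ⟪x, V⟫
  set M := sSup (g '' C)
  set m := sInf (g '' C)
  have hXC : X ⊆ C := inter_subset_left
  have hwC : 0 < width C V := by
    rcases div_pos_iff.mp (hs₀.trans hs) with h | h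
    · exact h.2
    · exact absurd h.2 (width_nonneg hb V).not_gt
  have hwC_eq : width C V = M - m := rfl
  have hwX : width X V = r * width C V := (div_mul_cancel₀ _ hwC.ne').symm
  have hs₁ : s < 1 := hs.trans_le (div_le_one_of_le₀ (width_mono hb hXC V) hwC.le)
  have hXne : X.Nonempty := .of_width_pos (v := V) (hwX ▸ mul_pos (hs₀.trans hs) hwC)
  have hβ : β ≤ M - width X V := by
    have hsup : sSup (g '' X) ≤ M :=
      csSup_le_csSup (isBounded_image_inner hb V).bddAbove (hXne.image g) (image_mono hXC)
    have hinf : β ≤ sInf (g '' X) :=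
      le_csInf (hXne.image g) (by rintro _ ⟨x, hx, rfl⟩; exact hx.2.le)
    change β ≤ M - (sSup (g '' X) - sInf (g '' X))
    linarith
  obtain ⟨_, ⟨p, hp, rfl⟩, hgp⟩ := exists_lt_of_lt_csSup ((hXne.mono hXC).image g)
    (sub_lt_self M (mul_pos (sub_pos.mpr hs) hwC))
  refine ⟨p, fun x hx => ⟨hc hp hx (by linarith) hs₀.le (by ring), ?_⟩⟩
  have hgx : m ≤ ⟪x, V⟫ := csInf_le (isBounded_image_inner hb V).bddBelow ⟨x, hx, rfl⟩
  have hp' : (1 - s) * (M - (r - s) * width C V) < (1 - s) * ⟪p, V⟫ :=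
    mul_lt_mul_of_pos_left hgp (by linarith)
  have hx' : s * m ≤ s * ⟪x, V⟫ := mul_le_mul_of_nonneg_left hgx hs₀.le
  have hslack : 0 ≤ s * (r - s) * width C V := by
    have := sub_pos.mpr hs
    positivity
  show β < ⟪(1 - s) • p + s • x, V⟫
  rw [inner_add_left, real_inner_smul_left, real_inner_smul_left]
  nlinarith

theorem width_div_width_mul_width_le_width_inter_halfspace (hb : IsBounded C) (hc : Convex ℝ C)
    (V : EuclideanSpace ℝ (Fin n)) (β : ℝ) (v : EuclideanSpace ℝ (Fin n)) :
    width (C ∩ {x | β < ⟪x, V⟫}) V / width C V * width C v ≤ width (C ∩ {x | β < ⟪x, V⟫}) v := by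
  have hX : IsBounded (C ∩ {x | β < ⟪x, V⟫}) := hb.subset inter_subset_left
  refine mul_le_of_forall_lt_of_nonneg (div_nonneg (width_nonneg hX V) (width_nonneg hb V))
    (width_nonneg hX v) fun s hs₀ hs c _ hcw => ?_
  rcases hs₀.eq_or_lt with rfl | hs₀
  · simpa using width_nonneg hX v
  obtain ⟨p, hp⟩ := exists_homothety_subset_inter_halfspace hb hc hs₀ hs
  calc s * c ≤ s * width C v := by gcongr
    _ ≤ _ := mul_width_le_width_of_homothety_subset hb hX hs₀ hp v

end halfspace

theorem width_ratio_of_plank_removal_general {n : ℕ} (C : Set (EuclideanSpace ℝ (Fin n)))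
    (hb : Bornology.IsBounded C) (hc : Convex ℝ C)
    (V : EuclideanSpace ℝ (Fin n)) (a b : ℝ) (hab : a ≤ b)
    (P : Set (EuclideanSpace ℝ (Fin n)))
    (hP : P = {x | a ≤ (inner ℝ x V : ℝ) ∧ (inner ℝ x V : ℝ) ≤ b})
    (X : Set (EuclideanSpace ℝ (Fin n))) (hX : X = C \ P)
    (hXconv : Convex ℝ X)
    (v : EuclideanSpace ℝ (Fin n)) :
    width X v ≥ (width X V / width C V) * width C v := by
  subst hX hP
  rcases diff_preimage_Icc_eq_inter_or (f := fun x => ⟪x, V⟫) (by fun_prop) hab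
    hXconv.isPreconnected with hX | hX
  · rw [hX]
    exact width_div_width_mul_width_le_width_inter_halfspace hb hc V b v
  · have hflip : C ∩ {x | ⟪x, V⟫ < a} = C ∩ {x | -a < ⟪x, -V⟫} := by
      simp only [inner_neg_right, neg_lt_neg_iff]
    rw [hX, hflip]
    simpa only [width_neg] using
      width_div_width_mul_width_le_width_inter_halfspace hb hc (-V) (-a) v

theorem width_ratio_of_plank_removal {n : ℕ} (C : Set (EuclideanSpace ℝ (Fin n)))
    (hb : Bornology.IsBounded C) (hc : Convex ℝ C)
    (V : EuclideanSpace ℝ (Fin n)) (hV : ‖V‖ = 1) (a b : ℝ) (hab : a ≤ b)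
    (P : Set (EuclideanSpace ℝ (Fin n)))
    (hP : P = {x | a ≤ (inner ℝ x V : ℝ) ∧ (inner ℝ x V : ℝ) ≤ b})
    (X : Set (EuclideanSpace ℝ (Fin n))) (hX : X = C \ P)
    (hne : X.Nonempty) (hXconv : Convex ℝ X)
    (hwX : 0 < width X V) (hwC : 0 < width C V)
    (v : EuclideanSpace ℝ (Fin n)) (hv : ‖v‖ = 1) :
    width X v ≥ (width X V / width C V) * width C v :=
  width_ratio_of_plank_removal_general C hb hc V a b hab P hP X hX hXconv v
end

section
/- Let T be the closed equilateral triangle in ℝ² with side length 1. For each vertex p of T, let P_p be the plank of width 1/3 whose center line passes through p and bisects the interior angle of T at p (the plank's direction is perpendicular to this bisector). Then the three planks P_p cover T. -/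
noncomputable def vA : EuclideanSpace ℝ (Fin 2) := (WithLp.equiv 2 (Fin 2 → ℝ)).symm ![0, 0]
noncomputable def vB : EuclideanSpace ℝ (Fin 2) := (WithLp.equiv 2 (Fin 2 → ℝ)).symm ![1, 0]
noncomputable def vC : EuclideanSpace ℝ (Fin 2) :=
  (WithLp.equiv 2 (Fin 2 → ℝ)).symm ![1 / 2, Real.sqrt 3 / 2]

noncomputable def T : Set (EuclideanSpace ℝ (Fin 2)) := convexHull ℝ {vA, vB, vC}

/-- The plank of width `wd` whose center line passes through `p` in the direction of the
angle bisector at `p`; `u` is a unit vector normal to the bisector (parallel to the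
opposite side). -/
def plankAt (p u : EuclideanSpace ℝ (Fin 2)) (wd : ℝ) : Set (EuclideanSpace ℝ (Fin 2)) :=
  {x | |(inner ℝ (x - p) u : ℝ)| ≤ wd / 2}

/-! Write a point of the triangle in barycentric coordinates, `x = a • A + b • B + c • C`.
For a unit equilateral triangle `⟪x - A, C - B⟫ = (c - b) / 2`, and cyclically, so `x` lies in
the plank at `A` exactly when `|c - b| ≤ 1 / 3`. Among three nonnegative numbers summing to `1`,
two always differ by at most `1 / 3`: otherwise the largest would exceed `2 / 3` and the middle
one `1 / 3`. -/

open RealInnerProductSpace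

theorem exists_abs_sub_le_third_of_sum_eq_one {a b c : ℝ} (ha : 0 ≤ a) (hb : 0 ≤ b)
    (hc : 0 ≤ c) (habc : a + b + c = 1) :
    |c - b| ≤ 1 / 3 ∨ |c - a| ≤ 1 / 3 ∨ |b - a| ≤ 1 / 3 := by
  by_contra! h
  obtain ⟨hcb, hca, hba⟩ := h
  rcases lt_abs.mp hcb with hcb | hcb <;> rcases lt_abs.mp hca with hca | hca <;>
    rcases lt_abs.mp hba with hba | hba <;> linarith

theorem exists_barycentric_of_mem_convexHull_triple {𝕜 E : Type*} [Field 𝕜] [LinearOrder 𝕜]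
    [IsStrictOrderedRing 𝕜] [AddCommGroup E] [Module 𝕜 E] {A B C x : E}
    (hx : x ∈ convexHull 𝕜 {A, B, C}) :
    ∃ a b c : 𝕜, 0 ≤ a ∧ 0 ≤ b ∧ 0 ≤ c ∧ a + b + c = 1 ∧ x = a • A + b • B + c • C := by
  rw [← convexJoin_singleton_segment, mem_convexJoin] at hx
  obtain ⟨_, rfl, _, ⟨u, v, hu, hv, huv, rfl⟩, s, t, hs, ht, hst, rfl⟩ := hx
  refine ⟨s, t * u, t * v, hs, mul_nonneg ht hu, mul_nonneg ht hv, ?_, ?_⟩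
  · linear_combination hst + t * huv
  · simp only [smul_add, smul_smul, add_assoc]

section Equilateral

variable {V : Type*} [NormedAddCommGroup V] [InnerProductSpace ℝ V] {A B C : V}

theorem inner_sub_sub_of_equilateral (hAB : dist A B = 1) (hBC : dist B C = 1)
    (hCA : dist C A = 1) : ⟪B - A, C - A⟫ = 1 / 2 := by
  have h := norm_sub_sq_real (C - A) (B - A)
  rw [sub_sub_sub_cancel_right, ← dist_eq_norm, ← dist_eq_norm, ← dist_eq_norm, dist_comm C B,
    dist_comm B A, hAB, hBC, hCA] at h
  rw [real_inner_comm]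
  linarith

theorem inner_barycentric_sub_vertex (hAB : dist A B = 1) (hBC : dist B C = 1)
    (hCA : dist C A = 1) {a b c : ℝ} (habc : a + b + c = 1) :
    ⟪a • A + b • B + c • C - A, C - B⟫ = (c - b) / 2 := by
  have hBA : ⟪B - A, C - A⟫ = 1 / 2 := inner_sub_sub_of_equilateral hAB hBC hCA
  have hBB : ⟪B - A, B - A⟫ = 1 := by
    rw [real_inner_self_eq_norm_sq, ← dist_eq_norm, dist_comm, hAB, one_pow]
  have hCC : ⟪C - A, C - A⟫ = 1 := by
    rw [real_inner_self_eq_norm_sq, ← dist_eq_norm, hCA, one_pow]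
  have hx : a • A + b • B + c • C - A = b • (B - A) + c • (C - A) := by
    rw [show a = 1 - b - c by linarith]; module
  rw [hx, ← sub_sub_sub_cancel_right C B A, inner_sub_right, inner_add_left, inner_add_left]
  simp only [real_inner_smul_left, real_inner_comm (B - A) (C - A), hBA, hBB, hCC]
  ring

end Equilateral

theorem convexHull_subset_plankAt_union {A B C : EuclideanSpace ℝ (Fin 2)} (hAB : dist A B = 1)
    (hBC : dist B C = 1) (hCA : dist C A = 1) :
    convexHull ℝ {A, B, C} ⊆
      plankAt A (C - B) (1 / 3) ∪ plankAt B (C - A) (1 / 3) ∪ plankAt C (B - A) (1 / 3) := by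
  intro x hx
  obtain ⟨a, b, c, ha, hb, hc, habc, rfl⟩ := exists_barycentric_of_mem_convexHull_triple hx
  have hA := inner_barycentric_sub_vertex hAB hBC hCA habc
  have hB : ⟪a • A + b • B + c • C - B, C - A⟫ = (c - a) / 2 := by
    rw [show a • A + b • B + c • C = b • B + a • A + c • C by abel]
    exact inner_barycentric_sub_vertex (dist_comm A B ▸ hAB) (dist_comm C A ▸ hCA)
      (dist_comm B C ▸ hBC) (by linarith)
  have hC : ⟪a • A + b • B + c • C - C, B - A⟫ = (b - a) / 2 := by
    rw [show a • A + b • B + c • C = c • C + a • A + b • B by abel]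
    exact inner_barycentric_sub_vertex hCA hAB hBC (by linarith)
  simp only [plankAt, Set.mem_union, Set.mem_ofPred_eq, hA, hB, hC, abs_div, abs_two]
  rcases exists_abs_sub_le_third_of_sum_eq_one ha hb hc habc with h | h | h
  · exact .inl (.inl (by linarith))
  · exact .inl (.inr (by linarith))
  · exact .inr (by linarith)

theorem dist_vA_vB : dist vA vB = 1 := by
  simp [EuclideanSpace.dist_eq, vA, vB]

theorem dist_vB_vC : dist vB vC = 1 := by
  rw [EuclideanSpace.dist_eq, Real.sqrt_eq_one]
  norm_num [vB, vC, Fin.sum_univ_two, Real.dist_eq, div_pow]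

theorem dist_vC_vA : dist vC vA = 1 := by
  rw [EuclideanSpace.dist_eq, Real.sqrt_eq_one]
  norm_num [vA, vC, Fin.sum_univ_two, Real.dist_eq, div_pow]

theorem hunter_cover :
    T ⊆ plankAt vA (vC - vB) (1 / 3) ∪ plankAt vB (vC - vA) (1 / 3) ∪
      plankAt vC (vB - vA) (1 / 3) :=
  convexHull_subset_plankAt_union dist_vA_vB dist_vB_vC dist_vC_vA
end

section
/- Suppose C is a bounded convex subset of ℝⁿ covered by two planks P₁, P₂ in directions v₁, v₂ with widths w₁, w₂, such that C \ P₁ is convex. Then w₁/w_{v₁}(C) + w₂/w_{v₂}(C) ≥ 1 (terms with zero denominator interpreted as +∞). -/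
open Set Metric Bornology

theorem sub_mul_le_mul_of_forall_mul_le {D₁ D₂ w₁ w₂ : ℝ} (hD₁ : 0 ≤ D₁) (hD₂ : 0 ≤ D₂)
    (hw₁ : 0 ≤ w₁) (hw₂ : 0 ≤ w₂) (h : ∀ l, 0 < l → l * D₁ < D₁ - w₁ → l * D₂ ≤ w₂) :
    (D₁ - w₁) * D₂ ≤ w₂ * D₁ := by
  refine le_of_forall_lt_imp_le_of_dense fun c hc => ?_
  rcases le_or_gt c 0 with hc0 | hc0
  · exact hc0.trans (by positivity)
  have hD₂ : 0 < D₂ := by nlinarith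
  have hD₁ : 0 < D₁ := by nlinarith
  have key := h (c / (D₁ * D₂)) (by positivity) (by field_simp; linarith)
  field_simp at key
  linarith

theorem Set.OrdConnected.subset_Iio_or_subset_Ioi {α : Type*} [LinearOrder α] {s : Set α}
    (hs : s.OrdConnected) {a b : α} (hab : a ≤ b) (h : Disjoint s (Icc a b)) :
    s ⊆ Iio a ∨ s ⊆ Ioi b := by
  rw [or_iff_not_imp_left, not_subset]
  rintro ⟨x, hxs, hxa⟩ y hys
  rw [mem_Iio, not_lt] at hxa
  have hbx : b < x := lt_of_not_ge fun hxb => h.notMem_of_mem_left hxs ⟨hxa, hxb⟩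
  rw [mem_Ioi]
  by_contra! hyb
  have hya : y < a := lt_of_not_ge fun hay => h.notMem_of_mem_left hys ⟨hay, hyb⟩
  exact h.notMem_of_mem_left (hs.out hys hxs ⟨hya.le, hab.trans hbx.le⟩) ⟨le_rfl, hab⟩

variable {E : Type*} [AddCommGroup E] [Module ℝ E]

theorem LinearMap.mul_diam_image_le_of_homothety_mem_Icc {C : Set E} {g : E →ₗ[ℝ] ℝ} {p : E}
    {l b w : ℝ} (hl : 0 < l) (hw : 0 ≤ w)
    (h : ∀ x ∈ C, g ((1 - l) • p + l • x) ∈ Icc b (b + w)) :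
    l * diam (g '' C) ≤ w := by
  rw [← le_div_iff₀' hl]
  refine diam_le_of_forall_dist_le (by positivity) ?_
  rintro _ ⟨x, hx, rfl⟩ _ ⟨y, hy, rfl⟩
  have hxy := Real.dist_le_of_mem_Icc (h x hx) (h y hy)
  rw [le_div_iff₀' hl, Real.dist_eq, ← abs_of_pos hl, ← abs_mul]
  simp only [map_add, map_smul, smul_eq_mul, Real.dist_eq] at hxy
  rwa [add_sub_add_left_eq_sub, ← mul_sub, add_sub_cancel_left] at hxy

theorem Convex.two_plank_of_forall_le {C : Set E} (hC : Convex ℝ C) {f g : E →ₗ[ℝ] ℝ}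
    (hf : IsBounded (f '' C)) {a b w₁ w₂ : ℝ} (hw₁ : 0 ≤ w₁) (hw₂ : 0 ≤ w₂)
    (hle : ∀ x ∈ C, f x ≤ a + w₁) (hcover : ∀ x ∈ C, f x < a → g x ∈ Icc b (b + w₂)) :
    (diam (f '' C) - w₁) * diam (g '' C) ≤ w₂ * diam (f '' C) := by
  refine sub_mul_le_mul_of_forall_mul_le diam_nonneg diam_nonneg hw₁ hw₂ fun l hl hlD => ?_
  have hl1 : l < 1 := by
    by_contra!
    nlinarith [diam_nonneg (s := f '' C)]
  have hne : (f '' C).Nonempty := by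
    by_contra! h
    rw [h, diam_empty] at hlD
    linarith
  rw [Real.diam_eq hf] at hlD
  have hM : sSup (f '' C) ≤ a + w₁ := csSup_le hne (by rintro _ ⟨x, hx, rfl⟩; exact hle x hx)
  -- `p` is low enough that the copy of `C` shrunk towards `p` by `l` lies strictly below `a`.
  obtain ⟨_, ⟨p, hp, rfl⟩, hpa⟩ := exists_lt_of_csInf_lt hne
    (b := (a - l * sSup (f '' C)) / (1 - l)) (by rw [lt_div_iff₀ (by linarith)]; linarith)
  rw [lt_div_iff₀ (by linarith)] at hpa
  refine LinearMap.mul_diam_image_le_of_homothety_mem_Icc hl hw₂ fun x hx =>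
    hcover _ (hC hp hx (by linarith) hl.le (by ring)) ?_
  have hxM : f x ≤ sSup (f '' C) := le_csSup hf.bddAbove (mem_image_of_mem f hx)
  rw [map_add, map_smul, map_smul, smul_eq_mul, smul_eq_mul]
  nlinarith

theorem Convex.two_plank {C : Set E} (hC : Convex ℝ C) {f g : E →ₗ[ℝ] ℝ}
    (hf : IsBounded (f '' C)) {a b w₁ w₂ : ℝ} (hw₁ : 0 ≤ w₁) (hw₂ : 0 ≤ w₂)
    (hcover : C ⊆ f ⁻¹' Icc a (a + w₁) ∪ g ⁻¹' Icc b (b + w₂))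
    (hconv : Convex ℝ (C \ f ⁻¹' Icc a (a + w₁))) :
    (diam (f '' C) - w₁) * diam (g '' C) ≤ w₂ * diam (f '' C) := by
  have hP₂ : ∀ x ∈ C, f x ∉ Icc a (a + w₁) → g x ∈ Icc b (b + w₂) :=
    fun x hx h => (hcover hx).resolve_left h
  rcases (hconv.linear_image f).ordConnected.subset_Iio_or_subset_Ioi (by linarith : a ≤ a + w₁)
    (disjoint_left.2 (by rintro _ ⟨x, hx, rfl⟩; exact hx.2)) with hbelow | habove
  · refine hC.two_plank_of_forall_le hf hw₁ hw₂ (fun x hx => ?_) fun x hx hxa =>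
      hP₂ x hx fun h => hxa.not_ge h.1
    by_cases h : f x ∈ Icc a (a + w₁)
    · exact h.2
    · linarith [mem_Iio.1 (hbelow (mem_image_of_mem f ⟨hx, h⟩))]
  · have hneg : (-f) '' C = -(f '' C) := by rw [← image_neg_eq_neg, image_image]; rfl
    have key := hC.two_plank_of_forall_le (f := -f) (a := -(a + w₁)) (hneg ▸ hf.neg) hw₁ hw₂
      (fun x hx => ?_) fun x hx hxa => hP₂ x hx fun h => ?_
    · rwa [hneg, ← image_neg_eq_neg, isometry_neg.diam_image] at key
    · rw [LinearMap.neg_apply]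
      by_cases h : f x ∈ Icc a (a + w₁)
      · linarith [h.1]
      · linarith [mem_Ioi.1 (habove (mem_image_of_mem f ⟨hx, h⟩))]
    · rw [LinearMap.neg_apply] at hxa
      linarith [h.2]

theorem two_plank_inequality_general {n : ℕ} (C : Set (EuclideanSpace ℝ (Fin n)))
    (hb : Bornology.IsBounded C) (hc : Convex ℝ C)
    (v₁ v₂ : EuclideanSpace ℝ (Fin n))
    (a₁ a₂ w₁ w₂ : ℝ) (hw₁ : 0 ≤ w₁) (hw₂ : 0 ≤ w₂)
    (P₁ P₂ : Set (EuclideanSpace ℝ (Fin n)))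
    (hP₁ : P₁ = {x | a₁ ≤ (inner ℝ x v₁ : ℝ) ∧ (inner ℝ x v₁ : ℝ) ≤ a₁ + w₁})
    (hP₂ : P₂ = {x | a₂ ≤ (inner ℝ x v₂ : ℝ) ∧ (inner ℝ x v₂ : ℝ) ≤ a₂ + w₂})
    (hcover : C ⊆ P₁ ∪ P₂)
    (hconv : Convex ℝ (C \ P₁)) :
    (width C v₁ = 0 ∨ width C v₂ = 0) ∨ 1 ≤ w₁ / width C v₁ + w₂ / width C v₂ := by
  subst hP₁ hP₂
  have hbdd (v : EuclideanSpace ℝ (Fin n)) : IsBounded ((innerₗ _).flip v '' C) :=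
    (innerSLFlip ℝ v).lipschitz.isBounded_image hb
  have hwidth (v : EuclideanSpace ℝ (Fin n)) : width C v = diam ((innerₗ _).flip v '' C) :=
    (Real.diam_eq (hbdd v)).symm
  have key := hc.two_plank (f := (innerₗ _).flip v₁) (g := (innerₗ _).flip v₂) (hbdd v₁) hw₁ hw₂
    hcover hconv
  rw [← hwidth, ← hwidth] at key
  rw [or_iff_not_imp_left, not_or]
  rintro ⟨h₁, h₂⟩
  have hW₁ : 0 < width C v₁ := (hwidth v₁ ▸ diam_nonneg).lt_of_ne' h₁
  have hW₂ : 0 < width C v₂ := (hwidth v₂ ▸ diam_nonneg).lt_of_ne' h₂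
  rw [div_add_div _ _ h₁ h₂, le_div_iff₀ (by positivity)]
  linarith

theorem two_plank_inequality {n : ℕ} (C : Set (EuclideanSpace ℝ (Fin n)))
    (hb : Bornology.IsBounded C) (hc : Convex ℝ C)
    (v₁ v₂ : EuclideanSpace ℝ (Fin n)) (hv₁ : ‖v₁‖ = 1) (hv₂ : ‖v₂‖ = 1)
    (a₁ a₂ w₁ w₂ : ℝ) (hw₁ : 0 ≤ w₁) (hw₂ : 0 ≤ w₂)
    (P₁ P₂ : Set (EuclideanSpace ℝ (Fin n)))
    (hP₁ : P₁ = {x | a₁ ≤ (inner ℝ x v₁ : ℝ) ∧ (inner ℝ x v₁ : ℝ) ≤ a₁ + w₁})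
    (hP₂ : P₂ = {x | a₂ ≤ (inner ℝ x v₂ : ℝ) ∧ (inner ℝ x v₂ : ℝ) ≤ a₂ + w₂})
    (hcover : C ⊆ P₁ ∪ P₂)
    (hconv : Convex ℝ (C \ P₁)) :
    (width C v₁ = 0 ∨ width C v₂ = 0) ∨ 1 ≤ w₁ / width C v₁ + w₂ / width C v₂ :=
  two_plank_inequality_general C hb hc v₁ v₂ a₁ a₂ w₁ w₂ hw₁ hw₂ P₁ P₂ hP₁ hP₂ hcover hconv
end
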